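/- Let K be a flag simplicial complex on [m] containing a full subcomplex K_I that is a p-cycle with p ≥ 4 and vertex set I. Suppose that for every proper subset J ⊊ I and every J of the forms I ∪ {j} and {i_1, i_3, j_1, j_2} considered, H̃_1(K_J; ℤ) = 0 whenever J ≠ I. Then every vertex j ∉ I is joined by an edge to every vertex of I, and any two vertices j_1, j_2 ∉ I are joined by an edge; hence K = K_I ∗ Δ^q where q = m - p - 1. -/

import Mathlib

open Finset

noncomputable section

/-- An abstract simplicial complex on the vertex set `[m] = Fin m`
(the empty face is always included; faces are closed under passing to subsets). -/
structure SC (m : ℕ) where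
  faces : Set (Finset (Fin m))
  empty_mem : ∅ ∈ faces
  down_closed : ∀ s ∈ faces, ∀ t ⊆ s, t ∈ faces

variable {m : ℕ}

/-- The full subcomplex `K_J` on a vertex subset `J`. -/
def SC.full (K : SC m) (J : Finset (Fin m)) : SC m where
  faces := {s | s ∈ K.faces ∧ s ⊆ J}
  empty_mem := ⟨K.empty_mem, Finset.empty_subset J⟩
  down_closed := fun s hs t ht => ⟨K.down_closed s hs.1 t ht, ht.trans hs.2⟩

/-- `K` is a flag complex: every vertex is a face and every missing face has two vertices. -/
def SC.IsFlag (K : SC m) : Prop :=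
  (∀ v : Fin m, ({v} : Finset (Fin m)) ∈ K.faces) ∧
  ∀ s : Finset (Fin m), s ∉ K.faces → (∀ t ⊂ s, t ∈ K.faces) → s.card = 2

/-- The full subcomplex of `K` on `I` is the boundary of a `p`-gon (a `p`-cycle): its faces
are exactly the empty set, the vertices `f i` and the edges `{f i, f (i+1)}` for a cyclic
enumeration `f` of `I`. -/
def SC.IsPCycleOn (K : SC m) (I : Finset (Fin m)) (p : ℕ) : Prop :=
  ∃ f : ZMod p → Fin m, Function.Injective f ∧ (∀ v, v ∈ I ↔ ∃ i, f i = v) ∧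
    (K.full I).faces =
      {s | s = ∅ ∨ (∃ i, s = {f i}) ∨ ∃ i, s = ({f i, f (i + 1)} : Finset (Fin m))}

/-- `K = C_p` or `K = C_p ∗ Δ^q` (`q ≥ 0`): some `I` spans a `p`-cycle and a set is a face of
`K` exactly when its intersection with `I` is a face of the cycle (all vertices outside `I`
span a simplex joined to everything). -/
def SC.IsCycleJoinSimplex (K : SC m) (p : ℕ) : Prop :=
  ∃ I : Finset (Fin m), K.IsPCycleOn I p ∧
    K.faces = {s | s ∩ I ∈ (K.full I).faces}

/-- The set of `n`-dimensional simplices of `K`. -/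
def SC.simp (K : SC m) (n : ℕ) : Type :=
  {s : Finset (Fin m) // s ∈ K.faces ∧ s.card = n + 1}

/-- The group of simplicial `n`-chains of `K` with integer coefficients. -/
abbrev SC.Ch (K : SC m) (n : ℕ) : Type := K.simp n →₀ ℤ

/-- The `i`-th face of an `(n+1)`-simplex: delete the `i`-th vertex (in increasing order). -/
def SC.faceMap (K : SC m) {n : ℕ} (s : K.simp (n + 1)) (i : Fin (n + 2)) : K.simp n :=
  ⟨s.1.erase (s.1.orderEmbOfFin s.2.2 i),
   K.down_closed _ s.2.1 _ (Finset.erase_subset _ _),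
   by rw [Finset.card_erase_of_mem (Finset.orderEmbOfFin_mem _ s.2.2 i), s.2.2]; rfl⟩

/-- The simplicial boundary homomorphism `∂ : C_{n+1}(K) → C_n(K)`,
`∂s = Σ_i (-1)^i (i-th face of s)`. -/
def SC.bdry (K : SC m) (n : ℕ) : K.Ch (n + 1) →+ K.Ch n :=
  Finsupp.liftAddHom fun s => zmultiplesHom (K.Ch n)
    (∑ i : Fin (n + 2), ((-1 : ℤ) ^ (i : ℕ)) • Finsupp.single (K.faceMap s i) 1)

/-- The augmentation `ε : C_0(K) → ℤ`. -/
def SC.aug (K : SC m) : K.Ch 0 →+ ℤ :=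
  Finsupp.liftAddHom fun _ => AddMonoidHom.id ℤ

/-- The group of reduced `n`-cycles (using the augmentation in degree `0`). -/
def SC.cycles (K : SC m) : (n : ℕ) → AddSubgroup (K.Ch n)
  | 0 => (K.aug).ker
  | (n + 1) => (K.bdry n).ker

/-- Reduced simplicial homology `H̃_n(K; ℤ) = ker ∂_n / im ∂_{n+1}` (reduced in degree `0`
via the augmentation). -/
abbrev SC.redH (K : SC m) (n : ℕ) : Type :=
  (K.cycles n) ⧸ ((K.bdry n).range.comap (K.cycles n).subtype)

/-! If an edge `e` of an embedded cycle in a complex `L` lies in no triangle of `L`, the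
fundamental 1-cycle of that cycle is not a boundary: its coefficient on `e` is `±1`, while every
boundary has coefficient `0` on `e`. Hence `H̃₁(L) ≠ 0`.

If a vertex `j ∉ I` were not joined to some `v ∈ I`, then in `K_{I ∪ {j}}` the `p`-gon would
survive with an edge at `v` in no triangle. If two vertices `j₁, j₂ ∉ I` were not joined, pick
non-adjacent vertices `a, c` of the `p`-gon (`p ≥ 4`); then `a j₁ c j₂` is a square without
diagonals spanning `J = {a, j₁, c, j₂}`, so again `H̃₁(K_J) ≠ 0`. A flag complex is determined by
its edges, which gives the join decomposition. -/

lemma ZMod.natCast_ne_zero_of_pos_of_lt {p k : ℕ} (hk : 0 < k) (hkp : k < p) :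
    (k : ZMod p) ≠ 0 := by
  rw [Ne, ZMod.natCast_eq_zero_iff]
  exact Nat.not_dvd_of_pos_of_lt hk hkp

lemma pair_add_one_injective {α : Type*} [DecidableEq α] {p : ℕ} (hp : 3 ≤ p)
    {f : ZMod p → α} (hf : Function.Injective f) :
    Function.Injective fun i => ({f i, f (i + 1)} : Finset α) := by
  have h1 : (1 : ZMod p) ≠ 0 := by
    exact_mod_cast ZMod.natCast_ne_zero_of_pos_of_lt one_pos (by omega)
  have h2 : (2 : ZMod p) ≠ 0 := by
    exact_mod_cast ZMod.natCast_ne_zero_of_pos_of_lt two_pos (by omega)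
  intro i j (hij : ({f i, f (i + 1)} : Finset α) = {f j, f (j + 1)})
  have hi : f i ∈ ({f j, f (j + 1)} : Finset α) := by rw [← hij]; simp
  have hi' : f (i + 1) ∈ ({f j, f (j + 1)} : Finset α) := by rw [← hij]; simp
  simp only [Finset.mem_insert, Finset.mem_singleton, hf.eq_iff] at hi hi'
  rcases hi with rfl | rfl
  · rfl
  · rcases hi' with h | h
    · exact absurd (by linear_combination h) h2
    · exact absurd (by linear_combination h) h1

namespace SC

section Chains

variable (L : SC m)

def vertex (a : Fin m) (h : ({a} : Finset (Fin m)) ∈ L.faces) : L.simp 0 :=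
  ⟨{a}, h, card_singleton a⟩

def edge {a b : Fin m} (hab : a ≠ b) (h : ({a, b} : Finset (Fin m)) ∈ L.faces) : L.simp 1 :=
  ⟨{a, b}, h, card_pair hab⟩

lemma bdry_single_edge {a b : Fin m} (hab : a < b) (h : ({a, b} : Finset (Fin m)) ∈ L.faces) :
    L.bdry 0 (Finsupp.single (L.edge hab.ne h) 1) =
      Finsupp.single (L.vertex b (L.down_closed _ h _ (by simp))) 1 -
        Finsupp.single (L.vertex a (L.down_closed _ h _ (by simp))) 1 := by
  have h0 : L.faceMap (L.edge hab.ne h) 0 = L.vertex b (L.down_closed _ h _ (by simp)) := by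
    apply Subtype.ext
    change ({a, b} : Finset (Fin m)).erase
      (orderEmbOfFin {a, b} (k := 2) (card_pair hab.ne) ⟨0, two_pos⟩) = {b}
    rw [orderEmbOfFin_zero _ two_pos, min'_pair, min_eq_left hab.le,
      erase_insert (by simpa using hab.ne)]
  have h1 : L.faceMap (L.edge hab.ne h) 1 = L.vertex a (L.down_closed _ h _ (by simp)) := by
    apply Subtype.ext
    change ({a, b} : Finset (Fin m)).erase
      (orderEmbOfFin {a, b} (k := 2) (card_pair hab.ne) ⟨2 - 1, by norm_num⟩) = {a}
    rw [orderEmbOfFin_last _ two_pos, max'_pair, max_eq_right hab.le, pair_comm,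
      erase_insert (by simpa using hab.ne')]
  rw [bdry, Finsupp.liftAddHom_apply_single, zmultiplesHom_apply, one_smul, Fin.sum_univ_two,
    h0, h1]
  simp [sub_eq_add_neg]

def orientedEdge {a b : Fin m} (hab : a ≠ b) (h : ({a, b} : Finset (Fin m)) ∈ L.faces) :
    L.Ch 1 :=
  Finsupp.single (L.edge hab h) (if a < b then 1 else -1)

lemma bdry_orientedEdge {a b : Fin m} (hab : a ≠ b) (h : ({a, b} : Finset (Fin m)) ∈ L.faces) :
    L.bdry 0 (L.orientedEdge hab h) =
      Finsupp.single (L.vertex b (L.down_closed _ h _ (by simp))) 1 -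
        Finsupp.single (L.vertex a (L.down_closed _ h _ (by simp))) 1 := by
  rw [orientedEdge, ← Finsupp.smul_single_one, map_zsmul]
  rcases hab.lt_or_gt with hlt | hgt
  · rw [if_pos hlt, one_smul, L.bdry_single_edge hlt]
  · have hflip : L.edge hab h = L.edge hab.symm (pair_comm a b ▸ h) :=
      Subtype.ext (pair_comm a b)
    rw [if_neg hgt.not_gt, hflip, L.bdry_single_edge hgt, neg_one_smul, neg_sub]

lemma bdry_apply_eq_zero_of_maximal {e : L.simp 1} (he : Maximal (· ∈ L.faces) e.1)
    (w : L.Ch 2) : L.bdry 1 w e = 0 := by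
  induction w using Finsupp.induction_linear with
  | zero => simp
  | add u v hu hv => simp [hu, hv]
  | single s c =>
    have hface : ∀ i, L.faceMap s i ≠ e := by
      intro i hi
      have hse : s.1 ⊆ e.1 := he.2 s.2.1 (hi ▸ erase_subset _ _)
      have := card_le_card hse
      rw [s.2.2, e.2.2] at this
      omega
    simp [bdry, hface]

variable {p : ℕ} [NeZero p]

def cycleChain {f : ZMod p → Fin m} (hf : ∀ i, f i ≠ f (i + 1))
    (he : ∀ i, ({f i, f (i + 1)} : Finset (Fin m)) ∈ L.faces) : L.Ch 1 :=
  ∑ i, L.orientedEdge (hf i) (he i)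

lemma bdry_cycleChain {f : ZMod p → Fin m} (hf : ∀ i, f i ≠ f (i + 1))
    (he : ∀ i, ({f i, f (i + 1)} : Finset (Fin m)) ∈ L.faces) :
    L.bdry 0 (L.cycleChain hf he) = 0 := by
  simp only [cycleChain, map_sum, bdry_orientedEdge, sum_sub_distrib, sub_eq_zero]
  exact Fintype.sum_equiv (Equiv.addRight 1) _ _ fun _ => rfl

lemma cycleChain_apply_edge_ne_zero (hp : 3 ≤ p) {f : ZMod p → Fin m}
    (hinj : Function.Injective f) (hf : ∀ i, f i ≠ f (i + 1))
    (he : ∀ i, ({f i, f (i + 1)} : Finset (Fin m)) ∈ L.faces) (i₀ : ZMod p) :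
    L.cycleChain hf he (L.edge (hf i₀) (he i₀)) ≠ 0 := by
  have hedge : ∀ i ≠ i₀, L.edge (hf i) (he i) ≠ L.edge (hf i₀) (he i₀) := fun i hi h =>
    hi (pair_add_one_injective hp hinj (congrArg Subtype.val h))
  simp only [cycleChain, orientedEdge, Finsupp.finsetSum_apply]
  rw [sum_eq_single_of_mem i₀ (mem_univ _) fun i _ hi => Finsupp.single_eq_of_ne (hedge i hi).symm,
    Finsupp.single_eq_same]
  split_ifs <;> norm_num

end Chains

theorem not_subsingleton_redH_one_of_cycle (L : SC m) {p : ℕ} (hp : 3 ≤ p) {f : ZMod p → Fin m}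
    (hinj : Function.Injective f) (he : ∀ i, ({f i, f (i + 1)} : Finset (Fin m)) ∈ L.faces)
    (i₀ : ZMod p) (hmax : Maximal (· ∈ L.faces) ({f i₀, f (i₀ + 1)} : Finset (Fin m))) :
    ¬Subsingleton (L.redH 1) := by
  have : NeZero p := ⟨by omega⟩
  have h1 : (1 : ZMod p) ≠ 0 := by
    exact_mod_cast ZMod.natCast_ne_zero_of_pos_of_lt one_pos (by omega)
  have hf : ∀ i, f i ≠ f (i + 1) := fun i h => h1 (by linear_combination -hinj h)
  intro hsub
  let z : L.cycles 1 := ⟨L.cycleChain hf he, L.bdry_cycleChain hf he⟩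
  obtain ⟨w, hw : L.bdry 1 w = L.cycleChain hf he⟩ :=
    (QuotientAddGroup.eq_zero_iff z).mp (Subsingleton.elim (z : L.redH 1) 0)
  apply L.cycleChain_apply_edge_ne_zero hp hinj hf he i₀
  rw [← hw]
  exact L.bdry_apply_eq_zero_of_maximal hmax w

variable {K : SC m} {I : Finset (Fin m)} {p : ℕ}

lemma full_faces_mono {J J' : Finset (Fin m)} (h : J ⊆ J') :
    (K.full J).faces ⊆ (K.full J').faces :=
  fun _ hs => ⟨hs.1, hs.2.trans h⟩

lemma IsPCycleOn.card_le_two (hcyc : K.IsPCycleOn I p) {s : Finset (Fin m)}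
    (hs : s ∈ (K.full I).faces) : s.card ≤ 2 := by
  obtain ⟨f, -, -, hfaces⟩ := hcyc
  rw [hfaces] at hs
  rcases hs with rfl | ⟨i, rfl⟩ | ⟨i, rfl⟩
  · simp
  · simp
  · exact Finset.card_le_two

lemma IsPCycleOn.exists_pair_notMem_faces (hp : 4 ≤ p) (hcyc : K.IsPCycleOn I p) :
    ∃ a ∈ I, ∃ c ∈ I, ({a, c} : Finset (Fin m)) ∉ K.faces := by
  obtain ⟨f, hf, hI, hfaces⟩ := hcyc
  have h1 : (1 : ZMod p) ≠ 0 := by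
    exact_mod_cast ZMod.natCast_ne_zero_of_pos_of_lt one_pos (by omega)
  have h2 : (2 : ZMod p) ≠ 0 := by
    exact_mod_cast ZMod.natCast_ne_zero_of_pos_of_lt two_pos (by omega)
  have h3 : (3 : ZMod p) ≠ 0 := by
    exact_mod_cast ZMod.natCast_ne_zero_of_pos_of_lt three_pos (by omega)
  refine ⟨f 0, (hI _).2 ⟨0, rfl⟩, f 2, (hI _).2 ⟨2, rfl⟩, fun hK => ?_⟩
  have hfull : ({f 0, f 2} : Finset (Fin m)) ∈ (K.full I).faces :=
    ⟨hK, insert_subset ((hI _).2 ⟨0, rfl⟩) (singleton_subset_iff.2 ((hI _).2 ⟨2, rfl⟩))⟩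
  rw [hfaces] at hfull
  rcases hfull with h | ⟨i, h⟩ | ⟨i, h⟩
  · simp at h
  · have h0 : f 0 ∈ ({f i} : Finset (Fin m)) := h ▸ by simp
    have h2' : f 2 ∈ ({f i} : Finset (Fin m)) := h ▸ by simp
    simp only [Finset.mem_singleton, hf.eq_iff] at h0 h2'
    grind
  · have h0 : f 0 ∈ ({f i, f (i + 1)} : Finset (Fin m)) := h ▸ by simp
    have h2' : f 2 ∈ ({f i, f (i + 1)} : Finset (Fin m)) := h ▸ by simp
    simp only [Finset.mem_insert, Finset.mem_singleton, hf.eq_iff] at h0 h2'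
    grind

theorem IsPCycleOn.pair_mem_faces (hp : 3 ≤ p) (hcyc : K.IsPCycleOn I p) {j v : Fin m}
    (hv : v ∈ I) (hvan : Subsingleton ((K.full (insert j I)).redH 1)) :
    ({j, v} : Finset (Fin m)) ∈ K.faces := by
  obtain ⟨f, hf, hI, hfaces⟩ := id hcyc
  obtain ⟨i₀, rfl⟩ := (hI v).1 hv
  have hedge : ∀ i, ({f i, f (i + 1)} : Finset (Fin m)) ∈ (K.full I).faces := fun i => by
    rw [hfaces]; exact Or.inr (Or.inr ⟨i, rfl⟩)
  have hcard : ({f i₀, f (i₀ + 1)} : Finset (Fin m)).card = 2 := by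
    have h1 : (1 : ZMod p) ≠ 0 := by
      exact_mod_cast ZMod.natCast_ne_zero_of_pos_of_lt one_pos (by omega)
    exact card_pair fun h => h1 (by linear_combination -hf h)
  by_contra hjv
  refine (K.full (insert j I)).not_subsingleton_redH_one_of_cycle hp hf
    (fun i => full_faces_mono (subset_insert j I) (hedge i)) i₀
    ⟨full_faces_mono (subset_insert j I) (hedge i₀), fun t ht hsub => ?_⟩ hvan
  have hjt : j ∉ t := fun hjt => hjv <| K.down_closed t ht.1 _ <|
    insert_subset hjt (singleton_subset_iff.2 (hsub (mem_insert_self _ _)))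
  have htI : t ∈ (K.full I).faces := ⟨ht.1, (subset_insert_iff_of_notMem hjt).1 ht.2⟩
  exact (eq_of_subset_of_card_le hsub ((hcyc.card_le_two htI).trans_eq hcard.symm)).ge

theorem not_subsingleton_redH_one_full_of_square {a b c d : Fin m}
    (hab : ({a, b} : Finset (Fin m)) ∈ K.faces) (hbc : ({b, c} : Finset (Fin m)) ∈ K.faces)
    (hcd : ({c, d} : Finset (Fin m)) ∈ K.faces) (hda : ({d, a} : Finset (Fin m)) ∈ K.faces)
    (hac : ({a, c} : Finset (Fin m)) ∉ K.faces) (hbd : ({b, d} : Finset (Fin m)) ∉ K.faces) :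
    ¬Subsingleton ((K.full {a, b, c, d}).redH 1) := by
  have hab' : a ≠ b := by rintro rfl; exact hac hbc
  have hbc' : b ≠ c := by rintro rfl; exact hac hab
  have hcd' : c ≠ d := by rintro rfl; exact hac (pair_comm c a ▸ hda)
  have hda' : d ≠ a := by rintro rfl; exact hac (pair_comm c d ▸ hcd)
  have hac' : a ≠ c := by rintro rfl; exact hac (K.down_closed _ hab _ (by simp))
  have hbd' : b ≠ d := by rintro rfl; exact hbd (K.down_closed _ hbc _ (by simp))
  let g : ZMod 4 → Fin m := ![a, b, c, d]
  have hg : Function.Injective g := by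
    intro x y h
    fin_cases x <;> fin_cases y <;> first | rfl | simp_all [g, eq_comm]
  have hedge : ∀ i, ({g i, g (i + 1)} : Finset (Fin m)) ∈ (K.full {a, b, c, d}).faces := by
    intro i
    fin_cases i
    · show ({a, b} : Finset (Fin m)) ∈ _; exact ⟨hab, by simp [insert_subset_iff]⟩
    · show ({b, c} : Finset (Fin m)) ∈ _; exact ⟨hbc, by simp [insert_subset_iff]⟩
    · show ({c, d} : Finset (Fin m)) ∈ _; exact ⟨hcd, by simp [insert_subset_iff]⟩
    · show ({d, a} : Finset (Fin m)) ∈ _; exact ⟨hda, by simp [insert_subset_iff]⟩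
  refine not_subsingleton_redH_one_of_cycle _ (by norm_num) hg hedge 0
    ⟨hedge 0, fun t ht hsub x hx => ?_⟩
  change x ∈ ({a, b} : Finset (Fin m))
  change ({a, b} : Finset (Fin m)) ⊆ t at hsub
  have hpair : ∀ y ∈ t, ∀ z ∈ t, ({y, z} : Finset (Fin m)) ∈ K.faces := fun y hy z hz =>
    K.down_closed t ht.1 _ (insert_subset hy (singleton_subset_iff.2 hz))
  have hxJ := ht.2 hx
  simp only [Finset.mem_insert, Finset.mem_singleton] at hxJ ⊢
  rcases hxJ with rfl | rfl | rfl | rfl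
  · exact .inl rfl
  · exact .inr rfl
  · exact absurd (hpair _ (hsub (by simp)) _ hx) hac
  · exact absurd (hpair _ (hsub (by simp)) _ hx) hbd

lemma IsFlag.mem_faces_of_pairwise (hflag : K.IsFlag) {s : Finset (Fin m)}
    (hs : ∀ a ∈ s, ∀ b ∈ s, a ≠ b → ({a, b} : Finset (Fin m)) ∈ K.faces) : s ∈ K.faces := by
  induction s using Finset.strongInduction with
  | H s ih =>
    by_contra hsK
    have hcard := hflag.2 s hsK fun t ht =>
      ih t ht fun a ha b hb hab => hs a (ht.subset ha) b (ht.subset hb) hab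
    obtain ⟨a, b, hab, rfl⟩ := card_eq_two.mp hcard
    exact hsK (hs a (by simp) b (by simp) hab)

lemma IsFlag.faces_eq_setOf_inter_mem_full (hflag : K.IsFlag)
    (hout : ∀ j ∉ I, ∀ v ∈ I, ({j, v} : Finset (Fin m)) ∈ K.faces)
    (hin : ∀ j₁ ∉ I, ∀ j₂ ∉ I, j₁ ≠ j₂ → ({j₁, j₂} : Finset (Fin m)) ∈ K.faces) :
    K.faces = {s | s ∩ I ∈ (K.full I).faces} := by
  ext s
  refine ⟨fun hs => ⟨K.down_closed s hs _ inter_subset_left, inter_subset_right⟩,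
    fun hs => hflag.mem_faces_of_pairwise fun x hx y hy hxy => ?_⟩
  by_cases hxI : x ∈ I <;> by_cases hyI : y ∈ I
  · exact K.down_closed _ hs.1 _
      (insert_subset (mem_inter.2 ⟨hx, hxI⟩) (singleton_subset_iff.2 (mem_inter.2 ⟨hy, hyI⟩)))
  · exact pair_comm y x ▸ hout y hyI x hxI
  · exact hout x hxI y hyI
  · exact hin x hxI y hyI hxy

end SC

theorem stmt4_general {m p : ℕ} (hp : 4 ≤ p) (K : SC m) (hflag : K.IsFlag) (I : Finset (Fin m))
    (hcyc : K.IsPCycleOn I p)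
    (hvan : ∀ J : Finset (Fin m), J ≠ I → Subsingleton ((K.full J).redH 1)) :
    (∀ j ∉ I, ∀ v ∈ I, ({j, v} : Finset (Fin m)) ∈ K.faces) ∧
    (∀ j₁ ∉ I, ∀ j₂ ∉ I, j₁ ≠ j₂ → ({j₁, j₂} : Finset (Fin m)) ∈ K.faces) ∧
    K.faces = {s | s ∩ I ∈ (K.full I).faces} := by
  have hout : ∀ j ∉ I, ∀ v ∈ I, ({j, v} : Finset (Fin m)) ∈ K.faces := fun j hj v hv =>
    hcyc.pair_mem_faces (by omega) hv (hvan _ fun h => hj (h ▸ mem_insert_self j I))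
  have hin : ∀ j₁ ∉ I, ∀ j₂ ∉ I, j₁ ≠ j₂ → ({j₁, j₂} : Finset (Fin m)) ∈ K.faces := by
    intro j₁ hj₁ j₂ hj₂ _
    obtain ⟨a, ha, c, hc, hac⟩ := hcyc.exists_pair_notMem_faces hp
    by_contra hj
    exact SC.not_subsingleton_redH_one_full_of_square (pair_comm j₁ a ▸ hout j₁ hj₁ a ha)
      (hout j₁ hj₁ c hc) (pair_comm j₂ c ▸ hout j₂ hj₂ c hc) (hout j₂ hj₂ a ha) hac hj
      (hvan _ fun h => hj₁ (h ▸ by simp))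
  exact ⟨hout, hin, hflag.faces_eq_setOf_inter_mem_full hout hin⟩

/-- let `K` be flag on `[m]` with a full subcomplex `K_I` a `p`-cycle (`p ≥ 4`)
such that `H̃₁(K_I; ℤ) = ℤ` and `H̃₁(K_J; ℤ) = 0` for every `J ≠ I`.  Then every vertex
outside `I` is joined by an edge to every vertex of `I`, any two vertices outside `I` are
joined by an edge, and hence `K = K_I ∗ Δ^q` with `q = m - p - 1`. -/
theorem stmt4 {m p : ℕ} (hp : 4 ≤ p) (K : SC m) (hflag : K.IsFlag) (I : Finset (Fin m))
    (hcyc : K.IsPCycleOn I p)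
    (hI : Nonempty ((K.full I).redH 1 ≃+ ℤ))
    (hvan : ∀ J : Finset (Fin m), J ≠ I → Subsingleton ((K.full J).redH 1)) :
    (∀ j ∉ I, ∀ v ∈ I, ({j, v} : Finset (Fin m)) ∈ K.faces) ∧
    (∀ j₁ ∉ I, ∀ j₂ ∉ I, j₁ ≠ j₂ → ({j₁, j₂} : Finset (Fin m)) ∈ K.faces) ∧
    K.faces = {s | s ∩ I ∈ (K.full I).faces} :=
  stmt4_general hp K hflag I hcyc hvan
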